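/- arXiv:1310.7393 — 6 statements merged into one kernel-verified Lean document; each statement's English description precedes it below -/
import Mathlib

section
/- Let h₁ and h₂ be horizontal endomorphisms on the prolongation L^π E of a Lie algebroid. If h₁ and h₂ have the same associated semispray (h₁S = h₂S for a/any semispray S) and the same strong torsion T = i_S t + H, then h₁ = h₂, where t = [J, h]^{F−N} is the weak torsion and H = [h, C]^{F−N} is the tension. -/
/-!
We work with a Lie algebroid `π : E → M` in a (global) trivialization:
the base `M` is modelled on a real normed space `A`, the fibre of `E` is a real
normed space `B`, the total space is `E = A × B`, sections of `E` are maps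
`A → B`, the anchor is `ρ : A → (B →L[ℝ] A)` and the structure function of the
bracket is `Lb : A → (B →L[ℝ] B →L[ℝ] B)`.  The prolongation `L^π E → E` is the
trivial bundle with fibre `B × B`; its sections are pairs of maps `(A × B) → B`
(the components along the canonical frames `𝒳_α` and `𝒱_α`).
-/

noncomputable section

variable {A B : Type*} [NormedAddCommGroup A] [NormedSpace ℝ A]
  [NormedAddCommGroup B] [NormedSpace ℝ B]

/-- Sections of the prolongation `L^π E → E`. -/
abbrev Sec (A B : Type*) := ((A × B) → B) × ((A × B) → B)

/-- The axioms of a Lie algebroid (smoothness, antisymmetry and the two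
structure equations: anchor compatibility and the Jacobi identity). -/
def IsLieAlgebroidData (ρ : A → B →L[ℝ] A) (Lb : A → B →L[ℝ] B →L[ℝ] B) : Prop :=
  ContDiff ℝ (⊤ : ℕ∞) ρ ∧ ContDiff ℝ (⊤ : ℕ∞) Lb ∧
    (∀ x u v, Lb x u v = - Lb x v u) ∧
    (∀ x u v, fderiv ℝ ρ x (ρ x u) v - fderiv ℝ ρ x (ρ x v) u = ρ x (Lb x u v)) ∧
    (∀ x u v w,
      fderiv ℝ Lb x (ρ x u) v w + Lb x u (Lb x v w) +
        fderiv ℝ Lb x (ρ x v) w u + Lb x v (Lb x w u) +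
          fderiv ℝ Lb x (ρ x w) u v + Lb x w (Lb x u v) = 0)

/-- The Lie algebroid bracket `[X, Y]_E` of two sections of `E`. -/
def abr (ρ : A → B →L[ℝ] A) (Lb : A → B →L[ℝ] B →L[ℝ] B) (X Y : A → B) : A → B :=
  fun x => fderiv ℝ Y x (ρ x (X x)) - fderiv ℝ X x (ρ x (Y x)) + Lb x (X x) (Y x)

/-- The action `ρ(X)(f)` of a section through the anchor. -/
def ρf (ρ : A → B →L[ℝ] A) (X : A → B) (f : A → ℝ) : A → ℝ :=
  fun x => fderiv ℝ f x (ρ x (X x))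

/-- Vertical lift `f^∨ = f ∘ π` of a function on `M`. -/
def fvert (f : A → ℝ) : A × B → ℝ := fun p => f p.1

/-- Complete lift `f^c(u) = ρ(u)(f)` of a function on `M`. -/
def fcomp (ρ : A → B →L[ℝ] A) (f : A → ℝ) : A × B → ℝ :=
  fun p => fderiv ℝ f p.1 (ρ p.1 p.2)

/-- The tangent vector to `E` determined by a prolongation section through the
prolongation anchor `ρ_L(u, z) = z`. -/
def ρL (ρ : A → B →L[ℝ] A) (U : Sec A B) (p : A × B) : A × B :=
  (ρ p.1 (U.1 p), U.2 p)

/-- The bracket `[·,·]_L` of the prolongation Lie algebroid `L^π E`. -/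
def pbr (ρ : A → B →L[ℝ] A) (Lb : A → B →L[ℝ] B →L[ℝ] B) (U V : Sec A B) : Sec A B :=
  (fun p => fderiv ℝ V.1 p (ρL ρ U p) - fderiv ℝ U.1 p (ρL ρ V p) + Lb p.1 (U.1 p) (V.1 p),
   fun p => fderiv ℝ V.2 p (ρL ρ U p) - fderiv ℝ U.2 p (ρL ρ V p))

/-- The vertical endomorphism `J = i ∘ j` of `L^π E`. -/
def vJ (U : Sec A B) : Sec A B := (0, U.1)

/-- The Liouville (Euler) section `C = i ∘ δ`. -/
def Liou : Sec A B := (0, fun p => p.2)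

/-- Vertical lift `X^V` of a section of `E` to `L^π E`. -/
def vlift (X : A → B) : Sec A B := (0, fun p => X p.1)

/-- Complete lift `X^C` of a section of `E` to `L^π E`. -/
def clift (ρ : A → B →L[ℝ] A) (Lb : A → B →L[ℝ] B →L[ℝ] B) (X : A → B) : Sec A B :=
  (fun p => X p.1, fun p => fderiv ℝ X p.1 (ρ p.1 p.2) - Lb p.1 (X p.1) p.2)

/-- The horizontal endomorphism with coefficient `𝓑`
(`h = (𝒳_β + 𝓑^α_β 𝒱_α) ⊗ 𝒳^β`). -/
def hor (𝓑 : A × B → B →L[ℝ] B) (U : Sec A B) : Sec A B :=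
  (U.1, fun p => 𝓑 p (U.1 p))

/-- The vertical projector `v = Id − h` associated to a horizontal endomorphism. -/
def vpr (𝓑 : A × B → B →L[ℝ] B) (U : Sec A B) : Sec A B := U - hor 𝓑 U

/-- Horizontal lift `X^h = h(X^C)`. -/
def hlift (ρ : A → B →L[ℝ] A) (Lb : A → B →L[ℝ] B →L[ℝ] B)
    (𝓑 : A × B → B →L[ℝ] B) (X : A → B) : Sec A B :=
  hor 𝓑 (clift ρ Lb X)

/-- Multiplication of a prolongation section by a function on `E`. -/
def fsmul (g : A × B → ℝ) (U : Sec A B) : Sec A B :=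
  (fun p => g p • U.1 p, fun p => g p • U.2 p)

/-- Generalized Frölicher–Nijenhuis bracket `[K, Z]^{F-N}` of a `(1,1)`-tensor
with a section: `[K, Z]^{F-N}(U) = [K(U), Z]_L − K([U, Z]_L)`. -/
def fnKZ (ρ : A → B →L[ℝ] A) (Lb : A → B →L[ℝ] B →L[ℝ] B)
    (K : Sec A B → Sec A B) (Z U : Sec A B) : Sec A B :=
  pbr ρ Lb (K U) Z - K (pbr ρ Lb U Z)

/-- Generalized Frölicher–Nijenhuis bracket `[Z, K]^{F-N}` of a section with a
`(1,1)`-tensor. -/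
def fnZK (ρ : A → B →L[ℝ] A) (Lb : A → B →L[ℝ] B →L[ℝ] B)
    (Z : Sec A B) (K : Sec A B → Sec A B) (U : Sec A B) : Sec A B :=
  pbr ρ Lb Z (K U) - K (pbr ρ Lb Z U)

/-- Generalized Frölicher–Nijenhuis bracket of two `(1,1)`-tensors, evaluated on
two sections. -/
def fnKL (ρ : A → B →L[ℝ] A) (Lb : A → B →L[ℝ] B →L[ℝ] B)
    (K L' : Sec A B → Sec A B) (U V : Sec A B) : Sec A B :=
  pbr ρ Lb (K U) (L' V) + pbr ρ Lb (L' U) (K V)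
    + K (L' (pbr ρ Lb U V)) + L' (K (pbr ρ Lb U V))
    - K (pbr ρ Lb U (L' V)) - K (pbr ρ Lb (L' U) V)
    - L' (pbr ρ Lb U (K V)) - L' (pbr ρ Lb (K U) V)

/-- The slit total space `E ∖ {0}` (complement of the zero section). -/
def Slit : Set (A × B) := {p | p.2 ≠ 0}

/-- Smoothness of a prolongation section (on all of `E`). -/
def SecSmooth (U : Sec A B) : Prop :=
  ContDiff ℝ (⊤ : ℕ∞) U.1 ∧ ContDiff ℝ (⊤ : ℕ∞) U.2

/-- Smoothness of a prolongation section away from the zero section. -/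
def SecSmoothOn (U : Sec A B) : Prop :=
  ContDiffOn ℝ (⊤ : ℕ∞) U.1 (Slit (A := A) (B := B)) ∧
    ContDiffOn ℝ (⊤ : ℕ∞) U.2 (Slit (A := A) (B := B))

/-- Equality of prolongation sections away from the zero section. -/
def OnSlit (U V : Sec A B) : Prop :=
  ∀ p : A × B, p.2 ≠ 0 → U.1 p = V.1 p ∧ U.2 p = V.2 p

/-- The semispray associated to the horizontal endomorphism `𝓑` (i.e. `h(S)` for
any semispray `S`). -/
def Sassoc (𝓑 : A × B → B →L[ℝ] B) : Sec A B :=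
  (fun p => p.2, fun p => 𝓑 p p.2)

/-- The Nijenhuis tensor `N_h` of the horizontal endomorphism `𝓑`. -/
def NijH (ρ : A → B →L[ℝ] A) (Lb : A → B →L[ℝ] B →L[ℝ] B)
    (𝓑 : A × B → B →L[ℝ] B) (U V : Sec A B) : Sec A B :=
  pbr ρ Lb (hor 𝓑 U) (hor 𝓑 V) - hor 𝓑 (pbr ρ Lb (hor 𝓑 U) V)
    - hor 𝓑 (pbr ρ Lb U (hor 𝓑 V)) + hor 𝓑 (pbr ρ Lb U V)

/-- The curvature `Ω = −N_h` of a horizontal endomorphism. -/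
def CurvH (ρ : A → B →L[ℝ] A) (Lb : A → B →L[ℝ] B →L[ℝ] B)
    (𝓑 : A × B → B →L[ℝ] B) (U V : Sec A B) : Sec A B :=
  - NijH ρ Lb 𝓑 U V

/-- The strong torsion `T = i_S t + H` of a horizontal endomorphism, where
`t = [J, h]^{F-N}` is the weak torsion and `H = [h, C]^{F-N}` the tension. -/
def StrongTor (ρ : A → B →L[ℝ] A) (Lb : A → B →L[ℝ] B →L[ℝ] B)
    (𝓑 : A × B → B →L[ℝ] B) (U : Sec A B) : Sec A B :=
  fnKL ρ Lb vJ (hor 𝓑) (Sassoc 𝓑) U + fnKZ ρ Lb (hor 𝓑) Liou U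

/-- The almost complex structure `F = h ∘ [S, h]^{F-N} − J` induced by a
horizontal endomorphism with associated semispray `S`. -/
def bigF (ρ : A → B →L[ℝ] A) (Lb : A → B →L[ℝ] B →L[ℝ] B)
    (𝓑 : A × B → B →L[ℝ] B) (U : Sec A B) : Sec A B :=
  hor 𝓑 (fnZK ρ Lb (Sassoc 𝓑) (hor 𝓑) U) - vJ U

/-- Homogeneity of a horizontal endomorphism: its tension `H = [h, C]^{F-N}`
vanishes. -/
def HomogeneousH (ρ : A → B →L[ℝ] A) (Lb : A → B →L[ℝ] B →L[ℝ] B)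
    (𝓑 : A × B → B →L[ℝ] B) : Prop :=
  ∀ U : Sec A B, SecSmoothOn U → OnSlit (fnKZ ρ Lb (hor 𝓑) Liou U) 0

/-- Torsion-freeness of a horizontal endomorphism: its weak torsion
`t = [J, h]^{F-N}` vanishes. -/
def TorsionFreeH (ρ : A → B →L[ℝ] A) (Lb : A → B →L[ℝ] B →L[ℝ] B)
    (𝓑 : A × B → B →L[ℝ] B) : Prop :=
  ∀ U V : Sec A B, SecSmoothOn U → SecSmoothOn V →
    OnSlit (fnKL ρ Lb vJ (hor 𝓑) U V) 0

/-- The one-form `d^L_J F = i_J d^L F` of a Finsler function. -/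
def θF (Fl : A × B → ℝ) (U : Sec A B) : A × B → ℝ :=
  fun p => fderiv ℝ Fl p ((0 : A), U.1 p)

/-- The fundamental two-form `ω = d^L d^L_J F` of a Finsler function. -/
def ωF (ρ : A → B →L[ℝ] A) (Lb : A → B →L[ℝ] B →L[ℝ] B)
    (Fl : A × B → ℝ) (U V : Sec A B) : A × B → ℝ :=
  fun p => fderiv ℝ (θF Fl V) p (ρL ρ U p) - fderiv ℝ (θF Fl U) p (ρL ρ V p)
    - θF Fl (pbr ρ Lb U V) p

/-- The axioms of a Finsler algebroid: the fundamental function is smooth away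
from the zero section, positive there, homogeneous of degree `2`
(`ρ_L(C)(F) = 2F`), and its fundamental form `ω = d^L d^L_J F` is
nondegenerate. -/
def IsFinslerData (ρ : A → B →L[ℝ] A) (Lb : A → B →L[ℝ] B →L[ℝ] B)
    (Fl : A × B → ℝ) : Prop :=
  ContDiffOn ℝ (⊤ : ℕ∞) Fl (Slit (A := A) (B := B)) ∧
    (∀ p : A × B, p.2 ≠ 0 → 0 < Fl p) ∧
    (∀ p : A × B, p.2 ≠ 0 → fderiv ℝ Fl p ((0 : A), p.2) = 2 * Fl p) ∧
    (∀ W : Sec A B, SecSmoothOn W →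
      (∀ U : Sec A B, SecSmoothOn U → ∀ p : A × B, p.2 ≠ 0 → ωF ρ Lb Fl W U p = 0) →
      ∀ p : A × B, p.2 ≠ 0 → W.1 p = 0 ∧ W.2 p = 0)

/-- Conservativity of a horizontal endomorphism: `d^L_h F = 0`. -/
def Conservative (ρ : A → B →L[ℝ] A) (Fl : A × B → ℝ)
    (𝓑 : A × B → B →L[ℝ] B) : Prop :=
  ∀ p : A × B, p.2 ≠ 0 → ∀ z : B, fderiv ℝ Fl p (ρ p.1 z, 𝓑 p z) = 0

/-- The vertical metric `G(J X̃, J Ỹ) = ω(J X̃, Ỹ)`, evaluated on two vertical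
sections. -/
def Gmet (ρ : A → B →L[ℝ] A) (Lb : A → B →L[ℝ] B →L[ℝ] B)
    (Fl : A × B → ℝ) (W₁ W₂ : Sec A B) : A × B → ℝ :=
  ωF ρ Lb Fl ((0 : (A × B) → B), W₁.2) (W₂.2, (0 : (A × B) → B))

/-- The prolongation `G̃(X̃, Ỹ) = G(J X̃, J Ỹ) + G(v X̃, v Ỹ)` of the vertical
metric along the horizontal endomorphism `𝓑`. -/
def Gtil (ρ : A → B →L[ℝ] A) (Lb : A → B →L[ℝ] B →L[ℝ] B)
    (Fl : A × B → ℝ) (𝓑 : A × B → B →L[ℝ] B) (U V : Sec A B) : A × B → ℝ :=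
  fun p => Gmet ρ Lb Fl (vJ U) (vJ V) p + Gmet ρ Lb Fl (vpr 𝓑 U) (vpr 𝓑 V) p

/-- The linear connection on `E` with Christoffel coefficient `Γ`:
`∇_X Y = ρ(X)(Y) + Γ(X, Y)`. -/
def covD (ρ : A → B →L[ℝ] A) (Γ : A → B →L[ℝ] B →L[ℝ] B) (X Y : A → B) : A → B :=
  fun x => fderiv ℝ Y x (ρ x (X x)) + Γ x (X x) (Y x)

/-- The coefficient of the horizontal endomorphism `h_∇` generated by the linear
connection `Γ` (`𝓑^β_α = −y^γ Γ^β_{αγ}`). -/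
def horOf (Γ : A → B →L[ℝ] B →L[ℝ] B) : A × B → B →L[ℝ] B :=
  fun p => -((Γ p.1).flip p.2)

/-! Test the strong torsion on the constant section `𝒳_c = (c, 0)`: its vertical part is
`𝓑 c − (∂_y 𝓑)(c)(y) − Lb(y, c)`, while differentiating the semispray `y ↦ 𝓑(x, y) y` in the
vertical direction `c` gives `𝓑 c + (∂_y 𝓑)(c)(y)`. The sum no longer involves the derivative
of `𝓑`, so `2 𝓑` is determined by `T` and the semispray. -/

lemma fderiv_sassoc_snd_apply {𝓑 : A × B → B →L[ℝ] B} {p : A × B}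
    (hd : DifferentiableAt ℝ 𝓑 p) (v : A × B) :
    fderiv ℝ (Sassoc 𝓑).2 p v = 𝓑 p v.2 + fderiv ℝ 𝓑 p v p.2 := by
  change fderiv ℝ (fun q : A × B => 𝓑 q q.2) p v = _
  rw [fderiv_clm_apply hd differentiableAt_snd, fderiv_snd]
  rfl

lemma strongTor_const_snd_apply (ρ : A → B →L[ℝ] A) (Lb : A → B →L[ℝ] B →L[ℝ] B)
    {𝓑 : A × B → B →L[ℝ] B} {p : A × B} (hd : DifferentiableAt ℝ 𝓑 p) (c : B) :
    (StrongTor ρ Lb 𝓑 ((fun _ => c), 0)).2 p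
      = 𝓑 p c - fderiv ℝ 𝓑 p ((0 : A), c) p.2 - Lb p.1 p.2 c := by
  have hc : fderiv ℝ (fun q : A × B => 𝓑 q c) p = (fderiv ℝ 𝓑 p).flip c := by
    rw [fderiv_clm_apply hd (differentiableAt_const c), fderiv_const_apply]
    simp
  have hS : fderiv ℝ (fun q : A × B => 𝓑 q q.2) p ((0 : A), c)
      = 𝓑 p c + fderiv ℝ 𝓑 p ((0 : A), c) p.2 :=
    fderiv_sassoc_snd_apply hd _
  have hzero : fderiv ℝ (0 : (A × B) → B) p = 0 := fderiv_const_apply 0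
  simp only [StrongTor, fnKL, fnKZ, pbr, hor, vJ, Liou, Sassoc, ρL, Prod.snd_add, Prod.snd_sub,
    Pi.add_apply, Pi.sub_apply, Pi.zero_apply, hc, hS, hzero, fderiv_snd, fderiv_const_apply,
    zero_sub, sub_zero, add_zero, map_neg, map_zero, zero_apply, ContinuousLinearMap.flip_apply,
    ContinuousLinearMap.coe_snd']
  abel

lemma two_smul_apply_eq_strongTor_add_fderiv_sassoc (ρ : A → B →L[ℝ] A)
    (Lb : A → B →L[ℝ] B →L[ℝ] B) {𝓑 : A × B → B →L[ℝ] B} {p : A × B}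
    (hd : DifferentiableAt ℝ 𝓑 p) (c : B) :
    (2 : ℝ) • 𝓑 p c = (StrongTor ρ Lb 𝓑 ((fun _ => c), 0)).2 p
      + fderiv ℝ (Sassoc 𝓑).2 p ((0 : A), c) + Lb p.1 p.2 c := by
  rw [strongTor_const_snd_apply ρ Lb hd, fderiv_sassoc_snd_apply hd, two_smul]
  abel

theorem horizontal_endomorphism_determined_by_semispray_and_strong_torsion_general
    (ρ : A → B →L[ℝ] A) (Lb : A → B →L[ℝ] B →L[ℝ] B)
    (𝓑₁ 𝓑₂ : A × B → B →L[ℝ] B)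
    (h₁s : ContDiffOn ℝ (⊤ : ℕ∞) 𝓑₁ (Slit (A := A) (B := B)))
    (h₂s : ContDiffOn ℝ (⊤ : ℕ∞) 𝓑₂ (Slit (A := A) (B := B)))
    -- same associated semisprays
    (hsemi : ∀ p : A × B, p.2 ≠ 0 → 𝓑₁ p p.2 = 𝓑₂ p p.2)
    -- same strong torsions
    (htor : ∀ U : Sec A B, SecSmoothOn U →
      OnSlit (StrongTor ρ Lb 𝓑₁ U) (StrongTor ρ Lb 𝓑₂ U)) :
    ∀ p : A × B, p.2 ≠ 0 → 𝓑₁ p = 𝓑₂ p := by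
  intro p hp
  have hslit : Slit (A := A) (B := B) ∈ nhds p :=
    (isOpen_compl_singleton.preimage continuous_snd).mem_nhds hp
  have hd₁ : DifferentiableAt ℝ 𝓑₁ p := (h₁s.contDiffAt hslit).differentiableAt (by simp)
  have hd₂ : DifferentiableAt ℝ 𝓑₂ p := (h₂s.contDiffAt hslit).differentiableAt (by simp)
  have hS : fderiv ℝ (Sassoc 𝓑₁).2 p = fderiv ℝ (Sassoc 𝓑₂).2 p :=
    (Filter.eventuallyEq_of_mem hslit hsemi).fderiv_eq
  ext c
  have hT := (htor ((fun _ => c), 0) ⟨contDiffOn_const, contDiffOn_const⟩ p hp).2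
  apply smul_right_injective B (two_ne_zero' ℝ)
  simp only [two_smul_apply_eq_strongTor_add_fderiv_sassoc ρ Lb hd₁,
    two_smul_apply_eq_strongTor_add_fderiv_sassoc ρ Lb hd₂, hT, hS]

/-- If two horizontal endomorphisms on `L^π E` have the same
associated semispray and the same strong torsion `T = i_S t + H`, then they are
equal. -/
theorem horizontal_endomorphism_determined_by_semispray_and_strong_torsion
    (ρ : A → B →L[ℝ] A) (Lb : A → B →L[ℝ] B →L[ℝ] B)
    (halg : IsLieAlgebroidData ρ Lb)
    (𝓑₁ 𝓑₂ : A × B → B →L[ℝ] B)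
    (h₁s : ContDiffOn ℝ (⊤ : ℕ∞) 𝓑₁ (Slit (A := A) (B := B)))
    (h₂s : ContDiffOn ℝ (⊤ : ℕ∞) 𝓑₂ (Slit (A := A) (B := B)))
    -- same associated semisprays
    (hsemi : ∀ p : A × B, p.2 ≠ 0 → 𝓑₁ p p.2 = 𝓑₂ p p.2)
    -- same strong torsions
    (htor : ∀ U : Sec A B, SecSmoothOn U →
      OnSlit (StrongTor ρ Lb 𝓑₁ U) (StrongTor ρ Lb 𝓑₂ U)) :
    ∀ p : A × B, p.2 ≠ 0 → 𝓑₁ p = 𝓑₂ p :=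
  horizontal_endomorphism_determined_by_semispray_and_strong_torsion_general ρ Lb 𝓑₁ 𝓑₂ h₁s h₂s
    hsemi htor
end
end

section
/- Let h be a horizontal endomorphism on L^π E with associated semispray S. Then F := h∘[S,h]^{F−N} − J satisfies F∘F = −Id, i.e. F is an almost complex structure on L^π E. -/
/-!
We work with a Lie algebroid `π : E → M` in a (global) trivialization:
the base `M` is modelled on a real normed space `A`, the fibre of `E` is a real
normed space `B`, the total space is `E = A × B`, sections of `E` are maps
`A → B`, the anchor is `ρ : A → (B →L[ℝ] A)` and the structure function of the
bracket is `Lb : A → (B →L[ℝ] B →L[ℝ] B)`.  The prolongation `L^π E → E` is the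
trivial bundle with fibre `B × B`; its sections are pairs of maps `(A × B) → B`
(the components along the canonical frames `𝒳_α` and `𝒱_α`).
-/

noncomputable section

variable {A B : Type*} [NormedAddCommGroup A] [NormedSpace ℝ A]
  [NormedAddCommGroup B] [NormedSpace ℝ B]

/-- The fibrewise form of `F` at a point where `h` has coefficient `b`: writing
`z = y - b x` for the vertical component of `(x, y)`, it is `(z, b z) - (0, x)`. -/
def fiberF (b : B →L[ℝ] B) (w : B × B) : B × B :=
  (w.2 - b w.1, b (w.2 - b w.1) - w.1)

theorem fiberF_fiberF (b : B →L[ℝ] B) (w : B × B) : fiberF b (fiberF b w) = -w := by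
  ext <;> simp only [fiberF, map_sub, Prod.fst_neg, Prod.snd_neg] <;> abel

/-- `J [S, h]^{F-N} = v`: the derivatives of `U` cancel, and the horizontal part of `S`
is the identity map `p ↦ p.2`, whose derivative is the projection `snd`. -/
theorem fst_fnZK_Sassoc_hor (ρ : A → B →L[ℝ] A) (Lb : A → B →L[ℝ] B →L[ℝ] B)
    (𝓑 : A × B → B →L[ℝ] B) (U : Sec A B) (p : A × B) :
    (fnZK ρ Lb (Sassoc 𝓑) (hor 𝓑) U).1 p = U.2 p - 𝓑 p (U.1 p) := by
  have hS : (Sassoc 𝓑).1 = Prod.snd := rfl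
  simp [fnZK, pbr, hor, ρL, hS, fderiv_snd]

theorem bigF_apply (ρ : A → B →L[ℝ] A) (Lb : A → B →L[ℝ] B →L[ℝ] B)
    (𝓑 : A × B → B →L[ℝ] B) (U : Sec A B) (p : A × B) :
    ((bigF ρ Lb 𝓑 U).1 p, (bigF ρ Lb 𝓑 U).2 p) = fiberF (𝓑 p) (U.1 p, U.2 p) := by
  simp only [bigF, hor, vJ, Prod.fst_sub, Prod.snd_sub, Pi.sub_apply, Pi.zero_apply,
    sub_zero, fst_fnZK_Sassoc_hor, fiberF]

theorem almost_complex_structure_squares_to_minus_id_general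
    (ρ : A → B →L[ℝ] A) (Lb : A → B →L[ℝ] B →L[ℝ] B)
    (𝓑 : A × B → B →L[ℝ] B) :
    ∀ U : Sec A B, SecSmoothOn U →
      OnSlit (bigF ρ Lb 𝓑 (bigF ρ Lb 𝓑 U)) (-U) := by
  intro U _ p _
  have h : ((bigF ρ Lb 𝓑 (bigF ρ Lb 𝓑 U)).1 p, (bigF ρ Lb 𝓑 (bigF ρ Lb 𝓑 U)).2 p)
      = -(U.1 p, U.2 p) := by
    rw [bigF_apply, bigF_apply, fiberF_fiberF]
  exact Prod.ext_iff.mp h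

/-- For a horizontal endomorphism `h` with associated
semispray `S`, the map `F = h ∘ [S, h]^{F-N} − J` satisfies `F ∘ F = −Id`, i.e.
`F` is an almost complex structure on `L^π E`. -/
theorem almost_complex_structure_squares_to_minus_id
    (ρ : A → B →L[ℝ] A) (Lb : A → B →L[ℝ] B →L[ℝ] B)
    (halg : IsLieAlgebroidData ρ Lb)
    (𝓑 : A × B → B →L[ℝ] B)
    (h𝓑 : ContDiffOn ℝ (⊤ : ℕ∞) 𝓑 (Slit (A := A) (B := B))) :
    ∀ U : Sec A B, SecSmoothOn U →
      OnSlit (bigF ρ Lb 𝓑 (bigF ρ Lb 𝓑 U)) (-U) :=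
  almost_complex_structure_squares_to_minus_id_general ρ Lb 𝓑
end
end

section
/- Let h be a horizontal endomorphism on the prolongation L^π E of a Lie algebroid and define the horizontal lift of X ∈ Γ(E) by X^h = h(X^C). Then: (i) J(X^h) = X^V, (ii) h[X^h, Y^h]_L = ([X,Y]_E)^h, and (iii) ([X,Y]_E)^V = J[X^h, Y^h]_L, for all X, Y ∈ Γ(E). -/
/-!
We work with a Lie algebroid `π : E → M` in a (global) trivialization:
the base `M` is modelled on a real normed space `A`, the fibre of `E` is a real
normed space `B`, the total space is `E = A × B`, sections of `E` are maps
`A → B`, the anchor is `ρ : A → (B →L[ℝ] A)` and the structure function of the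
bracket is `Lb : A → (B →L[ℝ] B →L[ℝ] B)`.  The prolongation `L^π E → E` is the
trivial bundle with fibre `B × B`; its sections are pairs of maps `(A × B) → B`
(the components along the canonical frames `𝒳_α` and `𝒱_α`).
-/

noncomputable section

variable {A B : Type*} [NormedAddCommGroup A] [NormedSpace ℝ A]
  [NormedAddCommGroup B] [NormedSpace ℝ B]

theorem fderiv_comp_fst_apply {𝕜 E F G : Type*} [NontriviallyNormedField 𝕜]
    [NormedAddCommGroup E] [NormedSpace 𝕜 E] [NormedAddCommGroup F] [NormedSpace 𝕜 F]
    [NormedAddCommGroup G] [NormedSpace 𝕜 G] {Z : E → G} {p : E × F}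
    (hZ : DifferentiableAt 𝕜 Z p.1) (v : E × F) :
    fderiv 𝕜 (fun q : E × F => Z q.1) p v = fderiv 𝕜 Z p.1 v.1 := by
  rw [show (fun q : E × F => Z q.1) = Z ∘ Prod.fst from rfl,
    fderiv_comp p hZ differentiableAt_fst, fderiv_fst]
  rfl

theorem hor_eq_hlift_of_fst_eq (ρ : A → B →L[ℝ] A) (Lb : A → B →L[ℝ] B →L[ℝ] B)
    (𝓑 : A × B → B →L[ℝ] B) {U : Sec A B} {X : A → B} (hU : U.1 = fun p => X p.1) :
    hor 𝓑 U = hlift ρ Lb 𝓑 X := by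
  simp only [hor, hlift, clift, hU]

/-- `Y ∘ π` is constant along the fibres, so only the base component `ρ(X)` of the anchor of
`L^π E` differentiates it: the bracket of projectable sections projects to `[X, Y]_E`. -/
theorem pbr_fst_of_fst_eq (ρ : A → B →L[ℝ] A) (Lb : A → B →L[ℝ] B →L[ℝ] B)
    {U V : Sec A B} {X Y : A → B} (hX : Differentiable ℝ X) (hY : Differentiable ℝ Y)
    (hU : U.1 = fun p => X p.1) (hV : V.1 = fun p => Y p.1) :
    (pbr ρ Lb U V).1 = fun p => abr ρ Lb X Y p.1 := by
  funext p
  simp only [pbr, abr, ρL, hU, hV, fderiv_comp_fst_apply (hX p.1), fderiv_comp_fst_apply (hY p.1)]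

theorem horizontal_lift_identities_general
    (ρ : A → B →L[ℝ] A) (Lb : A → B →L[ℝ] B →L[ℝ] B)
    (𝓑 : A × B → B →L[ℝ] B)
    (X Y : A → B) (hX : ContDiff ℝ (⊤ : ℕ∞) X) (hY : ContDiff ℝ (⊤ : ℕ∞) Y) :
    vJ (hlift ρ Lb 𝓑 X) = vlift X ∧
    OnSlit (hor 𝓑 (pbr ρ Lb (hlift ρ Lb 𝓑 X) (hlift ρ Lb 𝓑 Y)))
      (hlift ρ Lb 𝓑 (abr ρ Lb X Y)) ∧
    OnSlit (vlift (abr ρ Lb X Y))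
      (vJ (pbr ρ Lb (hlift ρ Lb 𝓑 X) (hlift ρ Lb 𝓑 Y))) := by
  have hbr : (pbr ρ Lb (hlift ρ Lb 𝓑 X) (hlift ρ Lb 𝓑 Y)).1 = fun p => abr ρ Lb X Y p.1 :=
    pbr_fst_of_fst_eq ρ Lb (hX.differentiable (by simp)) (hY.differentiable (by simp)) rfl rfl
  refine ⟨rfl, fun p _ => ?_, fun p _ => ⟨rfl, congrFun hbr.symm p⟩⟩
  rw [hor_eq_hlift_of_fst_eq ρ Lb 𝓑 hbr]
  exact ⟨rfl, rfl⟩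

/-- For a horizontal endomorphism `h` on `L^π E` and the
horizontal lift `X^h = h(X^C)`: `J(X^h) = X^V`,
`h[X^h, Y^h]_L = ([X,Y]_E)^h` and `([X,Y]_E)^V = J[X^h, Y^h]_L`. -/
theorem horizontal_lift_identities
    (ρ : A → B →L[ℝ] A) (Lb : A → B →L[ℝ] B →L[ℝ] B)
    (halg : IsLieAlgebroidData ρ Lb)
    (𝓑 : A × B → B →L[ℝ] B)
    (h𝓑 : ContDiffOn ℝ (⊤ : ℕ∞) 𝓑 (Slit (A := A) (B := B)))
    (X Y : A → B) (hX : ContDiff ℝ (⊤ : ℕ∞) X) (hY : ContDiff ℝ (⊤ : ℕ∞) Y) :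
    vJ (hlift ρ Lb 𝓑 X) = vlift X ∧
    OnSlit (hor 𝓑 (pbr ρ Lb (hlift ρ Lb 𝓑 X) (hlift ρ Lb 𝓑 Y)))
      (hlift ρ Lb 𝓑 (abr ρ Lb X Y)) ∧
    OnSlit (vlift (abr ρ Lb X Y))
      (vJ (pbr ρ Lb (hlift ρ Lb 𝓑 X) (hlift ρ Lb 𝓑 Y))) :=
  horizontal_lift_identities_general ρ Lb 𝓑 X Y hX hY
end
end

section
/- Let h and h̄ be homogeneous horizontal endomorphisms on L^π E (i.e. their tensions [h,C]^{F−N} and [h̄,C]^{F−N} vanish). If [X^h, Y^V]_L = [X^{h̄}, Y^V]_L for all sections X, Y of E, then h = h̄. -/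
/-!
We work with a Lie algebroid `π : E → M` in a (global) trivialization:
the base `M` is modelled on a real normed space `A`, the fibre of `E` is a real
normed space `B`, the total space is `E = A × B`, sections of `E` are maps
`A → B`, the anchor is `ρ : A → (B →L[ℝ] A)` and the structure function of the
bracket is `Lb : A → (B →L[ℝ] B →L[ℝ] B)`.  The prolongation `L^π E → E` is the
trivial bundle with fibre `B × B`; its sections are pairs of maps `(A × B) → B`
(the components along the canonical frames `𝒳_α` and `𝒱_α`).
-/

noncomputable section

variable {A B : Type*} [NormedAddCommGroup A] [NormedSpace ℝ A]
  [NormedAddCommGroup B] [NormedSpace ℝ B]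

/-!
On constant sections `X = v`, `Y = w` the bracket `[X^h, Y^V]_L` has vertical
component `-∂𝓑(v)/∂y (w)`, so the hypothesis says that `𝓑` and `𝓑'` have the same
fibre derivatives. Homogeneity, tested on the constant section `(v, 0)`, is the
Euler relation `𝓑(x, y) = ∂𝓑/∂y (y)`, so taking `w = y` recovers `𝓑` from its
fibre derivative.
-/

theorem fnKZ_hor_Liou_const_snd (ρ : A → B →L[ℝ] A) (Lb : A → B →L[ℝ] B →L[ℝ] B)
    (𝓑 : A × B → B →L[ℝ] B) (v : B) (p : A × B) :
    (fnKZ ρ Lb (hor 𝓑) Liou ((fun _ => v, 0) : Sec A B)).2 p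
      = 𝓑 p v - fderiv ℝ (fun q => 𝓑 q v) p ((0 : A), p.2) := by
  simp [fnKZ, pbr, hor, Liou, ρL, fderiv_snd]

theorem HomogeneousH.apply_eq_fderiv_snd {ρ : A → B →L[ℝ] A}
    {Lb : A → B →L[ℝ] B →L[ℝ] B} {𝓑 : A × B → B →L[ℝ] B}
    (hhom : HomogeneousH ρ Lb 𝓑) {p : A × B} (hp : p.2 ≠ 0) (v : B) :
    𝓑 p v = fderiv ℝ (fun q => 𝓑 q v) p ((0 : A), p.2) := by
  have htension := (hhom (fun _ => v, 0) ⟨contDiffOn_const, contDiffOn_const⟩ p hp).2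
  rw [fnKZ_hor_Liou_const_snd] at htension
  exact sub_eq_zero.mp htension

theorem pbr_hlift_const_vlift_const_snd (ρ : A → B →L[ℝ] A)
    (Lb : A → B →L[ℝ] B →L[ℝ] B) (𝓑 : A × B → B →L[ℝ] B) (v w : B) (p : A × B) :
    (pbr ρ Lb (hlift ρ Lb 𝓑 fun _ => v) (vlift fun _ => w)).2 p
      = -fderiv ℝ (fun q => 𝓑 q v) p ((0 : A), w) := by
  simp [pbr, hlift, hor, clift, vlift, ρL]

theorem homogeneous_horizontal_endomorphisms_eq_general
    (ρ : A → B →L[ℝ] A) (Lb : A → B →L[ℝ] B →L[ℝ] B)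
    (𝓑 𝓑' : A × B → B →L[ℝ] B)
    (hhom : HomogeneousH ρ Lb 𝓑) (hhom' : HomogeneousH ρ Lb 𝓑')
    (heq : ∀ X Y : A → B, ContDiff ℝ (⊤ : ℕ∞) X → ContDiff ℝ (⊤ : ℕ∞) Y →
      OnSlit (pbr ρ Lb (hlift ρ Lb 𝓑 X) (vlift Y))
        (pbr ρ Lb (hlift ρ Lb 𝓑' X) (vlift Y))) :
    ∀ p : A × B, p.2 ≠ 0 → 𝓑 p = 𝓑' p := by
  intro p hp
  ext v
  have hvert := (heq (fun _ => v) (fun _ => p.2) contDiff_const contDiff_const p hp).2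
  rw [pbr_hlift_const_vlift_const_snd, pbr_hlift_const_vlift_const_snd, neg_inj] at hvert
  rw [hhom.apply_eq_fderiv_snd hp, hhom'.apply_eq_fderiv_snd hp, hvert]

/-- If `h` and `h̄` are homogeneous horizontal endomorphisms
on `L^π E` such that `[X^h, Y^V]_L = [X^{h̄}, Y^V]_L` for all sections `X, Y`
of `E`, then `h = h̄`. -/
theorem homogeneous_horizontal_endomorphisms_eq
    (ρ : A → B →L[ℝ] A) (Lb : A → B →L[ℝ] B →L[ℝ] B)
    (halg : IsLieAlgebroidData ρ Lb)
    (𝓑 𝓑' : A × B → B →L[ℝ] B)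
    (h𝓑 : ContDiffOn ℝ (⊤ : ℕ∞) 𝓑 (Slit (A := A) (B := B)))
    (h𝓑' : ContDiffOn ℝ (⊤ : ℕ∞) 𝓑' (Slit (A := A) (B := B)))
    (hhom : HomogeneousH ρ Lb 𝓑) (hhom' : HomogeneousH ρ Lb 𝓑')
    (heq : ∀ X Y : A → B, ContDiff ℝ (⊤ : ℕ∞) X → ContDiff ℝ (⊤ : ℕ∞) Y →
      OnSlit (pbr ρ Lb (hlift ρ Lb 𝓑 X) (vlift Y))
        (pbr ρ Lb (hlift ρ Lb 𝓑' X) (vlift Y))) :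
    ∀ p : A × B, p.2 ≠ 0 → 𝓑 p = 𝓑' p :=
  homogeneous_horizontal_endomorphisms_eq_general ρ Lb 𝓑 𝓑' hhom hhom' heq
end
end

section
/- Let h be a torsion-free, conservative horizontal endomorphism on a Finsler algebroid (E, F) with fundamental two-form ω = d^L d^L_J F. Then i_h ω = ω, where (i_h ω)(X̃, Ỹ) = ω(hX̃, Ỹ) + ω(X̃, hỸ). -/
/-!
We work with a Lie algebroid `π : E → M` in a (global) trivialization:
the base `M` is modelled on a real normed space `A`, the fibre of `E` is a real
normed space `B`, the total space is `E = A × B`, sections of `E` are maps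
`A → B`, the anchor is `ρ : A → (B →L[ℝ] A)` and the structure function of the
bracket is `Lb : A → (B →L[ℝ] B →L[ℝ] B)`.  The prolongation `L^π E → E` is the
trivial bundle with fibre `B × B`; its sections are pairs of maps `(A × B) → B`
(the components along the canonical frames `𝒳_α` and `𝒱_α`).
-/

noncomputable section

variable {A B : Type*} [NormedAddCommGroup A] [NormedSpace ℝ A]
  [NormedAddCommGroup B] [NormedSpace ℝ B]

/-!
At a point of `E ∖ {0}`, unfolding `ω = d^L d^L_J F` leaves `i_h ω - ω` equal to
`∂²F(hX, JY) - ∂²F(hY, JX) - ∂F(0, Lb(X, Y))`: all first derivatives of `X`, `Y` cancel.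
Differentiating the conservativity identity `∂F(hZ) = 0` along the fibre and using the symmetry
of `∂²F` turns each second-derivative term into `-∂F` of a fibre derivative of `𝓑`.
Torsion-freeness says that these fibre derivatives are symmetric up to exactly the `Lb` term,
so everything cancels.
-/

omit [NormedSpace ℝ A] [NormedSpace ℝ B] in
lemma isOpen_slit : IsOpen (Slit (A := A) (B := B)) :=
  isOpen_compl_singleton.preimage continuous_snd

lemma ContDiffOn.contDiffAt_of_mem_slit {F : Type*} [NormedAddCommGroup F] [NormedSpace ℝ F]
    {n : WithTop ℕ∞} {f : A × B → F} (hf : ContDiffOn ℝ n f (Slit (A := A) (B := B)))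
    {p : A × B} (hp : p.2 ≠ 0) : ContDiffAt ℝ n f p :=
  hf.contDiffAt (isOpen_slit.mem_nhds hp)

lemma fderiv_θF {Fl : A × B → ℝ} {W : Sec A B} {p : A × B}
    (hFl : DifferentiableAt ℝ (fderiv ℝ Fl) p) (hW : DifferentiableAt ℝ W.1 p) (w : A × B) :
    fderiv ℝ (θF Fl W) p w
      = fderiv ℝ (fderiv ℝ Fl) p w ((0 : A), W.1 p) + fderiv ℝ Fl p ((0 : A), fderiv ℝ W.1 p w) := by
  have hW' : HasFDerivAt (fun q => ((0 : A), W.1 q))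
      ((0 : (A × B) →L[ℝ] A).prod (fderiv ℝ W.1 p)) p :=
    (hasFDerivAt_const _ _).prodMk hW.hasFDerivAt
  change fderiv ℝ (fun q => fderiv ℝ Fl q ((0 : A), W.1 q)) p w = _
  rw [(hFl.hasFDerivAt.clm_apply hW').fderiv]
  simp [add_comm]

lemma ωF_hor_left_add_ωF_hor_right (ρ : A → B →L[ℝ] A) (Lb : A → B →L[ℝ] B →L[ℝ] B)
    {Fl : A × B → ℝ} (𝓑 : A × B → B →L[ℝ] B) {U V : Sec A B} {p : A × B}
    (hFl : DifferentiableAt ℝ (fderiv ℝ Fl) p)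
    (hU : DifferentiableAt ℝ U.1 p) (hV : DifferentiableAt ℝ V.1 p) :
    ωF ρ Lb Fl (hor 𝓑 U) V p + ωF ρ Lb Fl U (hor 𝓑 V) p
      = ωF ρ Lb Fl U V p
        + (fderiv ℝ (fderiv ℝ Fl) p (ρ p.1 (U.1 p), 𝓑 p (U.1 p)) ((0 : A), V.1 p)
          - fderiv ℝ (fderiv ℝ Fl) p (ρ p.1 (V.1 p), 𝓑 p (V.1 p)) ((0 : A), U.1 p)
          - fderiv ℝ Fl p ((0 : A), Lb p.1 (U.1 p) (V.1 p))) := by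
  have hθ : ∀ W : Sec A B, θF Fl (hor 𝓑 W) = θF Fl W := fun _ => rfl
  simp only [ωF, hθ, fderiv_θF hFl hU, fderiv_θF hFl hV]
  simp only [θF, pbr, ρL, hor]
  set L := (fderiv ℝ Fl p).comp (ContinuousLinearMap.inr ℝ A B)
  have hL : ∀ z : B, fderiv ℝ Fl p ((0 : A), z) = L z := fun _ => rfl
  simp only [hL, map_add, map_sub]
  ring

section
variable {ρ : A → B →L[ℝ] A} {Fl : A × B → ℝ} {𝓑 : A × B → B →L[ℝ] B}

/-- `d^L_h F = 0` differentiated along the fibre, where `ρ` is constant. -/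
lemma Conservative.fderiv_fderiv_vertical (hcons : Conservative ρ Fl 𝓑) {p : A × B}
    (hp : p.2 ≠ 0) (hFl : DifferentiableAt ℝ (fderiv ℝ Fl) p) (h𝓑 : DifferentiableAt ℝ 𝓑 p)
    (c z : B) :
    fderiv ℝ (fderiv ℝ Fl) p ((0 : A), c) (ρ p.1 z, 𝓑 p z)
      = - fderiv ℝ Fl p ((0 : A), fderiv ℝ (fun q => 𝓑 q z) p ((0 : A), c)) := by
  set fibre : B → A × B := fun y => (p.1, y)
  have hfibre : HasFDerivAt fibre (ContinuousLinearMap.inr ℝ A B) p.2 :=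
    (hasFDerivAt_const p.1 p.2).prodMk (hasFDerivAt_id p.2)
  have hdir : HasFDerivAt (fun q => (ρ p.1 z, 𝓑 q z))
      ((0 : (A × B) →L[ℝ] A).prod (fderiv ℝ (fun q => 𝓑 q z) p)) p :=
    (hasFDerivAt_const _ _).prodMk (h𝓑.clm_apply (differentiableAt_const z)).hasFDerivAt
  have hderiv := (hFl.hasFDerivAt.clm_apply hdir).comp p.2 hfibre
  have hzero : (fun y => fderiv ℝ Fl (fibre y) (ρ p.1 z, 𝓑 (fibre y) z)) =ᶠ[nhds p.2] 0 := by
    filter_upwards [isOpen_compl_singleton.mem_nhds hp] with y hy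
    exact hcons (p.1, y) hy z
  have hc := DFunLike.congr_fun
    (hderiv.unique ((hasFDerivAt_const 0 p.2).congr_of_eventuallyEq hzero)) c
  simp only [ContinuousLinearMap.add_comp, add_apply, ContinuousLinearMap.comp_apply,
    ContinuousLinearMap.inr_apply, ContinuousLinearMap.prod_apply, zero_apply,
    ContinuousLinearMap.flip_apply] at hc
  linarith

/-- The vertical component of the weak torsion on the constant sections `u`, `v`. -/
lemma TorsionFreeH.fderiv_vertical_apply_comm {Lb : A → B →L[ℝ] B →L[ℝ] B}
    (htf : TorsionFreeH ρ Lb 𝓑) {p : A × B} (hp : p.2 ≠ 0) (u v : B) :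
    fderiv ℝ (fun q => 𝓑 q v) p ((0 : A), u)
      = fderiv ℝ (fun q => 𝓑 q u) p ((0 : A), v) + Lb p.1 u v := by
  have hconst : ∀ z : B, SecSmoothOn ((fun _ : A × B => z, 0) : Sec A B) :=
    fun _ => ⟨contDiffOn_const, contDiffOn_const⟩
  have ht := (htf _ _ (hconst u) (hconst v) p hp).2
  simp only [fnKL, pbr, vJ, hor, ρL, Prod.snd_add, Prod.snd_sub,
    Pi.add_apply, Pi.sub_apply, Pi.zero_apply, Prod.snd_zero, fderiv_fun_const, fderiv_zero,
    zero_apply, map_zero, sub_zero, zero_add, add_zero, sub_self] at ht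
  rw [← sub_eq_zero]
  abel_nf at ht ⊢
  convert ht using 2

end

theorem torsion_free_conservative_ih_omega_general
    (ρ : A → B →L[ℝ] A) (Lb : A → B →L[ℝ] B →L[ℝ] B)
    (Fl : A × B → ℝ) (hF : IsFinslerData ρ Lb Fl)
    (𝓑 : A × B → B →L[ℝ] B)
    (h𝓑 : ContDiffOn ℝ (⊤ : ℕ∞) 𝓑 (Slit (A := A) (B := B)))
    (hcons : Conservative ρ Fl 𝓑)
    (htf : TorsionFreeH ρ Lb 𝓑) :
    ∀ U V : Sec A B, SecSmoothOn U → SecSmoothOn V →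
      ∀ p : A × B, p.2 ≠ 0 →
        ωF ρ Lb Fl (hor 𝓑 U) V p + ωF ρ Lb Fl U (hor 𝓑 V) p
          = ωF ρ Lb Fl U V p := by
  intro U V hU hV p hp
  have hFl := hF.1.contDiffAt_of_mem_slit hp
  have hFl' : DifferentiableAt ℝ (fderiv ℝ Fl) p :=
    (hFl.fderiv_right (m := 1) (by norm_cast)).differentiableAt (by norm_num)
  have h𝓑p := (h𝓑.contDiffAt_of_mem_slit hp).differentiableAt (by norm_num)
  have hsymm := hFl.isSymmSndFDerivAt (by
    rw [minSmoothness_of_isRCLikeNormedField]; norm_cast)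
  rw [ωF_hor_left_add_ωF_hor_right ρ Lb 𝓑 hFl'
      ((hU.1.contDiffAt_of_mem_slit hp).differentiableAt (by norm_num))
      ((hV.1.contDiffAt_of_mem_slit hp).differentiableAt (by norm_num)),
    hsymm.eq, hsymm.eq (ρ p.1 (V.1 p), _), hcons.fderiv_fderiv_vertical hp hFl' h𝓑p,
    hcons.fderiv_fderiv_vertical hp hFl' h𝓑p, htf.fderiv_vertical_apply_comm hp (U.1 p) (V.1 p)]
  have hvert_add : ∀ a b : B, fderiv ℝ Fl p ((0 : A), a + b)
      = fderiv ℝ Fl p ((0 : A), a) + fderiv ℝ Fl p ((0 : A), b) := fun a b => by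
    rw [← map_add, Prod.mk_add_mk, add_zero]
  rw [hvert_add]
  ring

/-- On a Finsler algebroid `(E, F)`, if `h` is a torsion-free
conservative horizontal endomorphism, then `i_h ω = ω` for the fundamental
two-form `ω = d^L d^L_J F`. -/
theorem torsion_free_conservative_ih_omega
    (ρ : A → B →L[ℝ] A) (Lb : A → B →L[ℝ] B →L[ℝ] B)
    (halg : IsLieAlgebroidData ρ Lb)
    (Fl : A × B → ℝ) (hF : IsFinslerData ρ Lb Fl)
    (𝓑 : A × B → B →L[ℝ] B)
    (h𝓑 : ContDiffOn ℝ (⊤ : ℕ∞) 𝓑 (Slit (A := A) (B := B)))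
    (hcons : Conservative ρ Fl 𝓑)
    (htf : TorsionFreeH ρ Lb 𝓑) :
    ∀ U V : Sec A B, SecSmoothOn U → SecSmoothOn V →
      ∀ p : A × B, p.2 ≠ 0 →
        ωF ρ Lb Fl (hor 𝓑 U) V p + ωF ρ Lb Fl U (hor 𝓑 V) p
          = ωF ρ Lb Fl U V p :=
  torsion_free_conservative_ih_omega_general ρ Lb Fl hF 𝓑 h𝓑 hcons htf
end
end

section
/- Let (E, F) be a Finsler algebroid with fundamental form ω = d^L d^L_J F, vertical endomorphism J, and Liouville section C. Then: (i) i_J ω = 0, (ii) L^L_C ω = ω, and (iii) i_C ω = d^L_J F. -/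
/-!
We work with a Lie algebroid `π : E → M` in a (global) trivialization:
the base `M` is modelled on a real normed space `A`, the fibre of `E` is a real
normed space `B`, the total space is `E = A × B`, sections of `E` are maps
`A → B`, the anchor is `ρ : A → (B →L[ℝ] A)` and the structure function of the
bracket is `Lb : A → (B →L[ℝ] B →L[ℝ] B)`.  The prolongation `L^π E → E` is the
trivial bundle with fibre `B × B`; its sections are pairs of maps `(A × B) → B`
(the components along the canonical frames `𝒳_α` and `𝒱_α`).
-/

noncomputable section

variable {A B : Type*} [NormedAddCommGroup A] [NormedSpace ℝ A]
  [NormedAddCommGroup B] [NormedSpace ℝ B]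

/-!
In the trivialization `d^L_J F` is `θ(U) = ∂F(0, U¹)`, and in `ω = d^L θ` the derivatives of the
sections cancel against `θ([U, V]_L)`, leaving
`ω(U, V) = ∂²F(ρ_L U, (0, V¹)) - ∂²F(ρ_L V, (0, U¹)) - ∂F(0, Lb(U¹, V¹))` (`ωF_eq`).
Then (i) is the symmetry of `∂²F`, and (iii) is the Euler relation `∂²F((0, y), (0, b)) = ∂F(0, b)`,
obtained by differentiating `∂F(0, y) = 2F` vertically. For (ii) one differentiates this formula
along `(0, y)`: the third derivatives that appear are reduced to second ones by differentiating the
Euler relation once more, and what is left cancels against `ω([C, U], V) + ω(U, [C, V])`, with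
`ρ_L [C, U] = C(ρ_L U) - (0, U²)`.
-/

open Topology Filter

section Calculus

variable {𝕜 X Y Z W : Type*} [NontriviallyNormedField 𝕜]
  [NormedAddCommGroup X] [NormedSpace 𝕜 X] [NormedAddCommGroup Y] [NormedSpace 𝕜 Y]
  [NormedAddCommGroup Z] [NormedSpace 𝕜 Z] [NormedAddCommGroup W] [NormedSpace 𝕜 W] {x : X}

theorem fderiv_clm_apply_eval {c : X → Y →L[𝕜] Z} {u : X → Y}
    (hc : DifferentiableAt 𝕜 c x) (hu : DifferentiableAt 𝕜 u x) (w : X) :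
    fderiv 𝕜 (fun q => c q (u q)) x w = c x (fderiv 𝕜 u x w) + fderiv 𝕜 c x w (u x) := by
  simp [fderiv_clm_apply hc hu]

theorem fderiv_clm_apply₂_eval {Φ : X → Y →L[𝕜] Z →L[𝕜] W} {a : X → Y} {b : X → Z}
    (hΦ : DifferentiableAt 𝕜 Φ x) (ha : DifferentiableAt 𝕜 a x) (hb : DifferentiableAt 𝕜 b x)
    (w : X) :
    fderiv 𝕜 (fun q => Φ q (a q) (b q)) x w =
      fderiv 𝕜 Φ x w (a x) (b x) + Φ x (fderiv 𝕜 a x w) (b x) + Φ x (a x) (fderiv 𝕜 b x w) := by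
  rw [fderiv_clm_apply_eval (hΦ.clm_apply ha) hb, fderiv_clm_apply_eval hΦ ha]
  simp only [add_apply]
  abel

theorem fderiv_zero_prodMk_eval {f : X → Z} (hf : DifferentiableAt 𝕜 f x) (w : X) :
    fderiv 𝕜 (fun q => ((0 : Y), f q)) x w = (0, fderiv 𝕜 f x w) := by
  simp [((hasFDerivAt_const (0 : Y) x).prodMk hf.hasFDerivAt).fderiv]

end Calculus

omit [NormedSpace ℝ A] [NormedSpace ℝ B] in
theorem slit_mem_nhds {p : A × B} (hp : p.2 ≠ 0) : Slit ∈ 𝓝 p :=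
  (continuous_snd.isOpen_preimage _ isOpen_ne).mem_nhds hp

theorem SecSmoothOn.contDiffAt {U : Sec A B} (hU : SecSmoothOn U) {p : A × B} (hp : p.2 ≠ 0)
    (n : ℕ) : ContDiffAt ℝ n U.1 p ∧ ContDiffAt ℝ n U.2 p :=
  ⟨(hU.1.contDiffAt (slit_mem_nhds hp)).of_le (by exact_mod_cast le_top),
    (hU.2.contDiffAt (slit_mem_nhds hp)).of_le (by exact_mod_cast le_top)⟩

theorem SecSmoothOn.differentiableAt {U : Sec A B} (hU : SecSmoothOn U) {p : A × B}
    (hp : p.2 ≠ 0) : DifferentiableAt ℝ U.1 p ∧ DifferentiableAt ℝ U.2 p :=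
  ⟨(hU.contDiffAt hp 1).1.differentiableAt one_ne_zero,
    (hU.contDiffAt hp 1).2.differentiableAt one_ne_zero⟩

section Euler

variable {Fl : A × B → ℝ} {p : A × B}

theorem hessian_vertical_euler (hFl : ContDiffAt ℝ 2 Fl p)
    (hhom : (fun q => fderiv ℝ Fl q (0, q.2)) =ᶠ[𝓝 p] fun q => 2 * Fl q) (b : B) :
    fderiv ℝ (fderiv ℝ Fl) p (0, p.2) (0, b) = fderiv ℝ Fl p (0, b) := by
  have hDFl : DifferentiableAt ℝ (fderiv ℝ Fl) p :=
    (hFl.fderiv_right (m := 1) le_rfl).differentiableAt one_ne_zero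
  have hderiv : fderiv ℝ (fun q => fderiv ℝ Fl q (0, q.2)) p (0, b) =
      fderiv ℝ (fun q => 2 * Fl q) p (0, b) := by
    rw [hhom.fderiv_eq]
  rw [fderiv_clm_apply_eval hDFl ((differentiableAt_const _).prodMk differentiableAt_snd),
    fderiv_zero_prodMk_eval differentiableAt_snd, fderiv_snd, fderiv_const_mul
    (hFl.differentiableAt two_ne_zero)] at hderiv
  simp only [ContinuousLinearMap.coe_snd', smul_apply, smul_eq_mul] at hderiv
  rw [hFl.isSymmSndFDerivAt (by simp)]
  linarith

theorem third_deriv_vertical_euler (hFl : ContDiffAt ℝ 3 Fl p)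
    (hhom : (fun q => fderiv ℝ Fl q (0, q.2)) =ᶠ[𝓝 p] fun q => 2 * Fl q) (w : A × B) (b : B) :
    fderiv ℝ (fderiv ℝ (fderiv ℝ Fl)) p (0, p.2) w (0, b) =
      fderiv ℝ (fderiv ℝ Fl) p w (0, b) - fderiv ℝ (fderiv ℝ Fl) p (0, w.2) (0, b) := by
  have hDFl : ContDiffAt ℝ 2 (fderiv ℝ Fl) p := hFl.fderiv_right (by norm_num)
  have hHess : DifferentiableAt ℝ (fderiv ℝ (fderiv ℝ Fl)) p :=
    (hDFl.fderiv_right (m := 1) (by norm_num)).differentiableAt one_ne_zero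
  have hnear : (fun q => fderiv ℝ (fderiv ℝ Fl) q (0, q.2) (0, b)) =ᶠ[𝓝 p]
      fun q => fderiv ℝ Fl q (0, b) := by
    filter_upwards [hFl.eventually (by simp), hhom.eventuallyEq_nhds] with q hFl_q hhom_q
    exact hessian_vertical_euler (hFl_q.of_le (by norm_num)) hhom_q b
  have hderiv : fderiv ℝ (fun q => fderiv ℝ (fderiv ℝ Fl) q (0, q.2) (0, b)) p w =
      fderiv ℝ (fun q => fderiv ℝ Fl q (0, b)) p w := by
    rw [hnear.fderiv_eq]
  rw [fderiv_clm_apply₂_eval hHess ((differentiableAt_const _).prodMk differentiableAt_snd)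
      (differentiableAt_const _), fderiv_zero_prodMk_eval differentiableAt_snd, fderiv_snd,
    fderiv_clm_apply_eval (hDFl.differentiableAt two_ne_zero) (differentiableAt_const _)]
    at hderiv
  simp only [ContinuousLinearMap.coe_snd', fderiv_fun_const, Pi.zero_apply, zero_apply,
    map_zero, add_zero] at hderiv
  rw [hDFl.isSymmSndFDerivAt (by simp)]
  linarith

end Euler

section FundamentalForm

variable {Fl : A × B → ℝ} {p : A × B}

theorem fderiv_θF_apply {V : Sec A B} (hFl : DifferentiableAt ℝ (fderiv ℝ Fl) p)
    (hV : DifferentiableAt ℝ V.1 p) (w : A × B) :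
    fderiv ℝ (θF Fl V) p w =
      fderiv ℝ Fl p (0, fderiv ℝ V.1 p w) + fderiv ℝ (fderiv ℝ Fl) p w (0, V.1 p) := by
  unfold θF
  rw [fderiv_clm_apply_eval hFl ((differentiableAt_const _).prodMk hV),
    fderiv_zero_prodMk_eval hV]

theorem ωF_eq (ρ : A → B →L[ℝ] A) (Lb : A → B →L[ℝ] B →L[ℝ] B) {U V : Sec A B}
    (hFl : DifferentiableAt ℝ (fderiv ℝ Fl) p)
    (hU : DifferentiableAt ℝ U.1 p) (hV : DifferentiableAt ℝ V.1 p) :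
    ωF ρ Lb Fl U V p =
      fderiv ℝ (fderiv ℝ Fl) p (ρL ρ U p) (0, V.1 p)
        - fderiv ℝ (fderiv ℝ Fl) p (ρL ρ V p) (0, U.1 p)
        - fderiv ℝ Fl p (0, Lb p.1 (U.1 p) (V.1 p)) := by
  simp only [ωF, fderiv_θF_apply hFl hV, fderiv_θF_apply hFl hU, θF, pbr,
    ← ContinuousLinearMap.inr_apply (R := ℝ) (M₁ := A), map_add, map_sub]
  ring

theorem ρL_liou (ρ : A → B →L[ℝ] A) : ρL ρ Liou p = (0, p.2) := by
  simp [ρL, Liou]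

theorem ωF_vJ_add_ωF_vJ (ρ : A → B →L[ℝ] A) (Lb : A → B →L[ℝ] B →L[ℝ] B) {U V : Sec A B}
    (hFl : ContDiffAt ℝ 2 Fl p) (hU : DifferentiableAt ℝ U.1 p)
    (hV : DifferentiableAt ℝ V.1 p) :
    ωF ρ Lb Fl (vJ U) V p + ωF ρ Lb Fl U (vJ V) p = 0 := by
  have hDFl := (hFl.fderiv_right (m := 1) le_rfl).differentiableAt one_ne_zero
  rw [ωF_eq ρ Lb hDFl (differentiableAt_const (0 : B)) hV,
    ωF_eq ρ Lb hDFl hU (differentiableAt_const (0 : B)), hFl.isSymmSndFDerivAt (by simp)]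
  simp [vJ, ρL, Prod.mk_zero_zero]

theorem ωF_liou (ρ : A → B →L[ℝ] A) (Lb : A → B →L[ℝ] B →L[ℝ] B) {U : Sec A B}
    (hFl : ContDiffAt ℝ 2 Fl p)
    (hhom : (fun q => fderiv ℝ Fl q (0, q.2)) =ᶠ[𝓝 p] fun q => 2 * Fl q)
    (hU : DifferentiableAt ℝ U.1 p) :
    ωF ρ Lb Fl Liou U p = θF Fl U p := by
  have hDFl := (hFl.fderiv_right (m := 1) le_rfl).differentiableAt one_ne_zero
  rw [ωF_eq ρ Lb hDFl (differentiableAt_const (0 : B)) hU, ρL_liou,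
    hessian_vertical_euler hFl hhom]
  simp [Liou, ρL, θF, Prod.mk_zero_zero]

end FundamentalForm

section Liouville

variable (ρ : A → B →L[ℝ] A) (Lb : A → B →L[ℝ] B →L[ℝ] B) {Fl : A × B → ℝ} {U V : Sec A B}
  {p : A × B}

theorem pbr_liou_fst :
    (pbr ρ Lb Liou U).1 = fun q => fderiv ℝ U.1 q (0, q.2) := by
  funext q
  simp only [pbr, ρL_liou]
  simp [Liou]

theorem pbr_liou_snd (q : A × B) :
    (pbr ρ Lb Liou U).2 q = fderiv ℝ U.2 q (0, q.2) - U.2 q := by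
  simp only [pbr, ρL_liou]
  simp [Liou, ρL, fderiv_snd]

theorem ρL_pbr_liou (hρ : DifferentiableAt ℝ ρ p.1) (hU₁ : DifferentiableAt ℝ U.1 p)
    (hU₂ : DifferentiableAt ℝ U.2 p) :
    ρL ρ (pbr ρ Lb Liou U) p = fderiv ℝ (ρL ρ U) p (0, p.2) - (0, U.2 p) := by
  have hρL : HasFDerivAt (ρL ρ U) _ p :=
    ((hρ.hasFDerivAt.comp p hasFDerivAt_fst).clm_apply hU₁.hasFDerivAt).prodMk
      hU₂.hasFDerivAt
  simp [hρL.fderiv, ρL, pbr_liou_fst, pbr_liou_snd]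

theorem fderiv_ωF_vertical (hρ : DifferentiableAt ℝ ρ p.1)
    (hLb : ContDiffAt ℝ 1 Lb p.1) (hFl : ContDiffAt ℝ 3 Fl p)
    (hU₁ : ContDiffAt ℝ 1 U.1 p) (hU₂ : DifferentiableAt ℝ U.2 p)
    (hV₁ : ContDiffAt ℝ 1 V.1 p) (hV₂ : DifferentiableAt ℝ V.2 p) (y : B) :
    fderiv ℝ (ωF ρ Lb Fl U V) p (0, y) =
      (fderiv ℝ (fderiv ℝ (fderiv ℝ Fl)) p (0, y) (ρL ρ U p) (0, V.1 p)
        + fderiv ℝ (fderiv ℝ Fl) p (fderiv ℝ (ρL ρ U) p (0, y)) (0, V.1 p)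
        + fderiv ℝ (fderiv ℝ Fl) p (ρL ρ U p) (0, fderiv ℝ V.1 p (0, y)))
      - (fderiv ℝ (fderiv ℝ (fderiv ℝ Fl)) p (0, y) (ρL ρ V p) (0, U.1 p)
        + fderiv ℝ (fderiv ℝ Fl) p (fderiv ℝ (ρL ρ V) p (0, y)) (0, U.1 p)
        + fderiv ℝ (fderiv ℝ Fl) p (ρL ρ V p) (0, fderiv ℝ U.1 p (0, y)))
      - (fderiv ℝ (fderiv ℝ Fl) p (0, y) (0, Lb p.1 (U.1 p) (V.1 p))
        + fderiv ℝ Fl p (0, Lb p.1 (fderiv ℝ U.1 p (0, y)) (V.1 p)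
            + Lb p.1 (U.1 p) (fderiv ℝ V.1 p (0, y)))) := by
  have hDFl : ContDiffAt ℝ 2 (fderiv ℝ Fl) p := hFl.fderiv_right (by norm_num)
  have hHess : DifferentiableAt ℝ (fderiv ℝ (fderiv ℝ Fl)) p :=
    (hDFl.fderiv_right (m := 1) (by norm_num)).differentiableAt one_ne_zero
  have hnear : ωF ρ Lb Fl U V =ᶠ[𝓝 p] fun q =>
      fderiv ℝ (fderiv ℝ Fl) q (ρL ρ U q) (0, V.1 q)
        - fderiv ℝ (fderiv ℝ Fl) q (ρL ρ V q) (0, U.1 q)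
        - fderiv ℝ Fl q (0, Lb q.1 (U.1 q) (V.1 q)) := by
    filter_upwards [hFl.eventually (by simp), hU₁.eventually (by simp),
      hV₁.eventually (by simp)] with q hFl_q hU_q hV_q
    exact ωF_eq ρ Lb ((hFl_q.fderiv_right (m := 1) (by norm_num)).differentiableAt one_ne_zero)
      (hU_q.differentiableAt one_ne_zero) (hV_q.differentiableAt one_ne_zero)
  have hDFl' := hDFl.differentiableAt two_ne_zero
  have hU₁' := hU₁.differentiableAt one_ne_zero
  have hV₁' := hV₁.differentiableAt one_ne_zero
  have hρL : ∀ {W : Sec A B}, DifferentiableAt ℝ W.1 p → DifferentiableAt ℝ W.2 p →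
      DifferentiableAt ℝ (ρL ρ W) p := fun hW₁ hW₂ =>
    ((hρ.comp p differentiableAt_fst).clm_apply hW₁).prodMk hW₂
  have hLbfst : HasFDerivAt (fun q : A × B => Lb q.1)
      ((fderiv ℝ Lb p.1).comp (ContinuousLinearMap.fst ℝ A B)) p :=
    (hLb.differentiableAt one_ne_zero).hasFDerivAt.comp p hasFDerivAt_fst
  have hLbUV : DifferentiableAt ℝ (fun q : A × B => Lb q.1 (U.1 q) (V.1 q)) p :=
    (hLbfst.differentiableAt.clm_apply hU₁').clm_apply hV₁'
  have haU := hρL hU₁' hU₂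
  have haV := hρL hV₁' hV₂
  rw [hnear.fderiv_eq, fderiv_fun_sub (by fun_prop) (by fun_prop),
    fderiv_fun_sub (by fun_prop) (by fun_prop)]
  simp only [sub_apply]
  rw [fderiv_clm_apply₂_eval hHess haU ((differentiableAt_const _).prodMk hV₁'),
    fderiv_clm_apply₂_eval hHess haV ((differentiableAt_const _).prodMk hU₁'),
    fderiv_clm_apply_eval hDFl' ((differentiableAt_const _).prodMk hLbUV),
    fderiv_zero_prodMk_eval hU₁', fderiv_zero_prodMk_eval hV₁',
    fderiv_zero_prodMk_eval hLbUV,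
    fderiv_clm_apply₂_eval hLbfst.differentiableAt hU₁' hV₁', hLbfst.fderiv]
  simp only [ContinuousLinearMap.coe_comp, Function.comp_apply, ContinuousLinearMap.coe_fst',
    map_zero, zero_apply, zero_add]
  ring

theorem lieDeriv_liou_ωF (hρ : DifferentiableAt ℝ ρ p.1)
    (hLb : ContDiffAt ℝ 1 Lb p.1) (hFl : ContDiffAt ℝ 3 Fl p)
    (hhom : (fun q => fderiv ℝ Fl q (0, q.2)) =ᶠ[𝓝 p] fun q => 2 * Fl q)
    (hU₁ : ContDiffAt ℝ 2 U.1 p) (hU₂ : DifferentiableAt ℝ U.2 p)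
    (hV₁ : ContDiffAt ℝ 2 V.1 p) (hV₂ : DifferentiableAt ℝ V.2 p) :
    fderiv ℝ (ωF ρ Lb Fl U V) p (ρL ρ Liou p)
      - ωF ρ Lb Fl (pbr ρ Lb Liou U) V p - ωF ρ Lb Fl U (pbr ρ Lb Liou V) p
      = ωF ρ Lb Fl U V p := by
  have hDFl := (hFl.fderiv_right (m := 1) (by norm_num)).differentiableAt one_ne_zero
  have hU₁' := hU₁.differentiableAt two_ne_zero
  have hV₁' := hV₁.differentiableAt two_ne_zero
  have hliou : ∀ {W : Sec A B}, ContDiffAt ℝ 2 W.1 p →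
      DifferentiableAt ℝ (pbr ρ Lb Liou W).1 p := fun hW => by
    rw [pbr_liou_fst]
    exact ((hW.fderiv_right (m := 1) le_rfl).differentiableAt one_ne_zero).clm_apply
      ((differentiableAt_const _).prodMk differentiableAt_snd)
  rw [ρL_liou, fderiv_ωF_vertical ρ Lb hρ hLb hFl (hU₁.of_le one_le_two) hU₂
      (hV₁.of_le one_le_two) hV₂, ωF_eq ρ Lb hDFl (hliou hU₁) hV₁',
    ωF_eq ρ Lb hDFl hU₁' (hliou hV₁), ωF_eq ρ Lb hDFl hU₁' hV₁',
    ρL_pbr_liou ρ Lb hρ hU₁' hU₂, ρL_pbr_liou ρ Lb hρ hV₁' hV₂,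
    third_deriv_vertical_euler hFl hhom, third_deriv_vertical_euler hFl hhom,
    hessian_vertical_euler (hFl.of_le (by norm_num)) hhom, pbr_liou_fst, pbr_liou_fst]
  simp only [map_sub, sub_apply, ρL, ← ContinuousLinearMap.inr_apply (R := ℝ) (M₁ := A),
    map_add]
  ring

end Liouville

/-- On a Finsler algebroid `(E, F)` with fundamental form
`ω = d^L d^L_J F`: `i_J ω = 0`, `L^L_C ω = ω` and `i_C ω = d^L_J F`. -/
theorem fundamental_form_identities
    (ρ : A → B →L[ℝ] A) (Lb : A → B →L[ℝ] B →L[ℝ] B)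
    (halg : IsLieAlgebroidData ρ Lb)
    (Fl : A × B → ℝ) (hF : IsFinslerData ρ Lb Fl) :
    (∀ U V : Sec A B, SecSmoothOn U → SecSmoothOn V → ∀ p : A × B, p.2 ≠ 0 →
      ωF ρ Lb Fl (vJ U) V p + ωF ρ Lb Fl U (vJ V) p = 0) ∧
    (∀ U V : Sec A B, SecSmoothOn U → SecSmoothOn V → ∀ p : A × B, p.2 ≠ 0 →
      fderiv ℝ (ωF ρ Lb Fl U V) p (ρL ρ Liou p)
        - ωF ρ Lb Fl (pbr ρ Lb Liou U) V p - ωF ρ Lb Fl U (pbr ρ Lb Liou V) p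
        = ωF ρ Lb Fl U V p) ∧
    (∀ U : Sec A B, SecSmoothOn U → ∀ p : A × B, p.2 ≠ 0 →
      ωF ρ Lb Fl Liou U p = θF Fl U p) := by
  obtain ⟨hρ, hLb, -, -, -⟩ := halg
  obtain ⟨hFl, -, hhom, -⟩ := hF
  have hFl_at {p : A × B} (hp : p.2 ≠ 0) (n : ℕ) : ContDiffAt ℝ n Fl p :=
    (hFl.contDiffAt (slit_mem_nhds hp)).of_le (by exact_mod_cast le_top)
  have hhom_at {p : A × B} (hp : p.2 ≠ 0) :
      (fun q => fderiv ℝ Fl q (0, q.2)) =ᶠ[𝓝 p] fun q => 2 * Fl q :=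
    eventually_of_mem (slit_mem_nhds hp) hhom
  refine ⟨fun U V hU hV p hp => ?_, fun U V hU hV p hp => ?_, fun U hU p hp => ?_⟩
  · exact ωF_vJ_add_ωF_vJ ρ Lb (hFl_at hp 2) (hU.differentiableAt hp).1
      (hV.differentiableAt hp).1
  · exact lieDeriv_liou_ωF ρ Lb (hρ.differentiable (by simp) p.1)
      (hLb.contDiffAt.of_le (by exact_mod_cast le_top)) (hFl_at hp 3) (hhom_at hp)
      (hU.contDiffAt hp 2).1 (hU.differentiableAt hp).2
      (hV.contDiffAt hp 2).1 (hV.differentiableAt hp).2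
  · exact ωF_liou ρ Lb (hFl_at hp 2) (hhom_at hp) (hU.differentiableAt hp).1
end
end
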